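/- Let α₁ > 0, α₂ > 0, β > −1, and 0 < c < 1. Define the moments of the generalized Hahn weight of type I by μ_n(c) = Σ_{x=0}^∞ x^n · (α₁)_x·(α₂)_x · c^x/((β+1)_x · x!) for n ∈ ℕ (these series converge absolutely for |c| < 1). Then (1 − c)·μ₂(c) = α₁·α₂·c·μ₀(c) + ((α₁ + α₂)·c − β)·μ₁(c). -/

import Mathlib

/-!
Write `aₙ(x) = xⁿ ρ(x)` (with `t` in place of `c`). For `x ≥ 1` consecutive terms have the ratio
`((x+1)/x)ⁿ (α₁+x)(α₂+x) t / ((x+1)(β+1+x)) → t`, which gives absolute convergence for `|t| < 1`.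
Since `(β+1)ₓ₊₁ = (β+1)ₓ (β+1+x)`, the combination `a₂(x+1) + β a₁(x+1) = (x+1)(β+1+x) a₀(x+1)`
cancels that denominator and equals `t (α₁+x)(α₂+x) a₀(x) = t (α₁α₂ a₀ + (α₁+α₂) a₁ + a₂)(x)`.
Summing over `x`, with `a₂(0) + β a₁(0) = 0`, gives `μ₂ + β μ₁ = t (α₁α₂ μ₀ + (α₁+α₂) μ₁ + μ₂)`.
-/

/-- The Pochhammer symbol (rising factorial) `(a)_x = a (a+1) ⋯ (a+x-1)`. -/
def poch (a : ℝ) (x : ℕ) : ℝ := ∏ i ∈ Finset.range x, (a + i)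

open Filter Topology

lemma poch_succ (a : ℝ) (x : ℕ) : poch a (x + 1) = poch a x * (a + x) :=
  Finset.prod_range_succ _ _

lemma tendsto_add_div_add_atTop (a b : ℝ) :
    Tendsto (fun k : ℕ => (a + k) / (b + k)) atTop (𝓝 1) := by
  simpa using tendsto_add_mul_div_add_mul_atTop_nhds a b 1 (one_ne_zero (α := ℝ))

/-- Unlike `summable_of_ratio_test_tendsto_lt_one`, no term needs to be nonzero. -/
lemma summable_of_eventually_succ_eq_mul {f q : ℕ → ℝ} {l : ℝ} (hl : |l| < 1)
    (hq : Tendsto q atTop (𝓝 l)) (hf : ∀ᶠ x in atTop, f (x + 1) = f x * q x) :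
    Summable f := by
  obtain ⟨r, hlr, hr1⟩ := exists_between hl
  refine summable_of_ratio_norm_eventually_le hr1 ?_
  filter_upwards [hf, hq.abs.eventually_lt_const hlr] with x hfx hqx
  rw [hfx, norm_mul, mul_comm, Real.norm_eq_abs]
  gcongr

namespace GeneralizedHahn

variable (α₁ α₂ β : ℝ)

noncomputable def momentTerm (n : ℕ) (t : ℝ) (x : ℕ) : ℝ :=
  (x : ℝ) ^ n * poch α₁ x * poch α₂ x * t ^ x / (poch (β + 1) x * x.factorial)

lemma momentTerm_succ (n : ℕ) (t : ℝ) {x : ℕ} (hx : x ≠ 0) :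
    momentTerm α₁ α₂ β n t (x + 1) = momentTerm α₁ α₂ β n t x *
      (((1 + x) / x) ^ n * ((α₁ + x) / (1 + x)) * ((α₂ + x) / (β + 1 + x)) * t) := by
  have hx : (x : ℝ) ≠ 0 := by exact_mod_cast hx
  simp only [momentTerm, poch_succ, Nat.factorial_succ]
  push_cast
  rw [div_pow]
  field_simp
  ring

lemma summable_momentTerm (n : ℕ) {t : ℝ} (ht : |t| < 1) :
    Summable (momentTerm α₁ α₂ β n t) := by
  have hratio : Tendsto (fun x : ℕ =>
      ((1 + x) / x) ^ n * ((α₁ + x) / (1 + x)) * ((α₂ + x) / (β + 1 + x)) * t)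
      atTop (𝓝 t) := by
    simpa using ((((tendsto_add_div_add_atTop 1 0).pow n).mul
      (tendsto_add_div_add_atTop α₁ 1)).mul (tendsto_add_div_add_atTop α₂ (β + 1))).mul_const t
  refine summable_of_eventually_succ_eq_mul ht hratio ?_
  filter_upwards [eventually_ne_atTop 0] with x hx
  exact momentTerm_succ α₁ α₂ β n t hx

lemma momentTerm_two_succ_add (t : ℝ) {x : ℕ} (hβx : β + 1 + x ≠ 0) :
    momentTerm α₁ α₂ β 2 t (x + 1) + β * momentTerm α₁ α₂ β 1 t (x + 1) =
      t * (α₁ * α₂ * momentTerm α₁ α₂ β 0 t x + (α₁ + α₂) * momentTerm α₁ α₂ β 1 t x +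
        momentTerm α₁ α₂ β 2 t x) := by
  simp only [momentTerm, poch_succ, Nat.factorial_succ]
  push_cast
  field_simp [hβx]
  ring

lemma tsum_momentTerm_relation (hβ : -1 < β) {t : ℝ} (ht : |t| < 1) :
    ∑' x, momentTerm α₁ α₂ β 2 t x + β * ∑' x, momentTerm α₁ α₂ β 1 t x =
      t * (α₁ * α₂ * ∑' x, momentTerm α₁ α₂ β 0 t x +
        (α₁ + α₂) * ∑' x, momentTerm α₁ α₂ β 1 t x + ∑' x, momentTerm α₁ α₂ β 2 t x) := by
  have hs (n : ℕ) := summable_momentTerm α₁ α₂ β n ht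
  calc ∑' x, momentTerm α₁ α₂ β 2 t x + β * ∑' x, momentTerm α₁ α₂ β 1 t x
      = ∑' x, (momentTerm α₁ α₂ β 2 t x + β * momentTerm α₁ α₂ β 1 t x) := by
        rw [(hs 2).tsum_add ((hs 1).mul_left β), tsum_mul_left]
    _ = ∑' x, (momentTerm α₁ α₂ β 2 t (x + 1) + β * momentTerm α₁ α₂ β 1 t (x + 1)) := by
        rw [((hs 2).add ((hs 1).mul_left β)).tsum_eq_zero_add]
        simp [momentTerm]
    _ = ∑' x, t * (α₁ * α₂ * momentTerm α₁ α₂ β 0 t x + (α₁ + α₂) * momentTerm α₁ α₂ β 1 t x +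
          momentTerm α₁ α₂ β 2 t x) :=
        tsum_congr fun x => momentTerm_two_succ_add α₁ α₂ β t
          (by linarith [x.cast_nonneg (α := ℝ)] : 0 < β + 1 + x).ne'
    _ = _ := by
        rw [tsum_mul_left, ((hs 0).mul_left _ |>.add ((hs 1).mul_left _)).tsum_add (hs 2),
          ((hs 0).mul_left _).tsum_add ((hs 1).mul_left _), tsum_mul_left, tsum_mul_left]

end GeneralizedHahn

open GeneralizedHahn in
theorem generalized_hahn_I_moment_relation_general
    (α₁ α₂ β c : ℝ) (hβ : β > -1)
    (hc : 0 < c) (hc1 : c < 1)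
    (mu : ℕ → ℝ → ℝ)
    (hmu : ∀ (n : ℕ) (t : ℝ),
      mu n t = ∑' x : ℕ,
        (x : ℝ) ^ n * poch α₁ x * poch α₂ x * t ^ x / (poch (β + 1) x * x.factorial)) :
    (∀ (n : ℕ) (t : ℝ), |t| < 1 →
      Summable fun x : ℕ =>
        |(x : ℝ) ^ n * poch α₁ x * poch α₂ x * t ^ x / (poch (β + 1) x * x.factorial)|) ∧
    (1 - c) * mu 2 c = α₁ * α₂ * c * mu 0 c + ((α₁ + α₂) * c - β) * mu 1 c := by
  refine ⟨fun n t ht => (summable_momentTerm α₁ α₂ β n ht).abs, ?_⟩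
  have hc' : |c| < 1 := by rwa [abs_of_pos hc]
  have hmu' (n : ℕ) : mu n c = ∑' x, momentTerm α₁ α₂ β n c x := hmu n c
  rw [hmu', hmu', hmu']
  linear_combination tsum_momentTerm_relation α₁ α₂ β hβ hc'

/-- The moments of the generalized Hahn weight of type I satisfy
`(1-c) μ₂(c) = α₁ α₂ c μ₀(c) + ((α₁+α₂) c - β) μ₁(c)`; the defining series
converge absolutely for `|c| < 1`. -/
theorem generalized_hahn_I_moment_relation
    (α₁ α₂ β c : ℝ) (hα₁ : 0 < α₁) (hα₂ : 0 < α₂) (hβ : β > -1)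
    (hc : 0 < c) (hc1 : c < 1)
    (mu : ℕ → ℝ → ℝ)
    (hmu : ∀ (n : ℕ) (t : ℝ),
      mu n t = ∑' x : ℕ,
        (x : ℝ) ^ n * poch α₁ x * poch α₂ x * t ^ x / (poch (β + 1) x * x.factorial)) :
    (∀ (n : ℕ) (t : ℝ), |t| < 1 →
      Summable fun x : ℕ =>
        |(x : ℝ) ^ n * poch α₁ x * poch α₂ x * t ^ x / (poch (β + 1) x * x.factorial)|) ∧
    (1 - c) * mu 2 c = α₁ * α₂ * c * mu 0 c + ((α₁ + α₂) * c - β) * mu 1 c :=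
  generalized_hahn_I_moment_relation_general α₁ α₂ β c hβ hc hc1 mu hmu
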